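/- arXiv:0811.4112 — 3 statements merged into one kernel-verified Lean document; each statement's English description precedes it below -/
import Mathlib

section
/- Let h > 0, n a positive integer, j₂ ≥ 0 an integer, and k₂ ∈ {0,…,n−1}. Let Ωʰⱼ be the preimage under αʰ (restricted to x₂ ≥ 0) of the unit square [j₁,j₁+1]×[j₂,j₂+1] and Ωʰⱼₖ the preimage of the subsquare [j₁+k₁/n, j₁+(k₁+1)/n]×[j₂+k₂/n, j₂+(k₂+1)/n]. Then the ratio of Lebesgue measures satisfies λ(Ωʰⱼₖ)/λ(Ωʰⱼ) = (1/n²)·(√(j₂+1)+√j₂)/(√(j₂+(k₂+1)/n)+√(j₂+k₂/n)). -/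
/-! On the half-plane x₂ ≥ 0 the map αʰ acts coordinatewise as x₁ ↦ h x₁ and x₂ ↦ h x₂², so the
preimage of a rectangle [a, b] × [c, d] is the rectangle [a/h, b/h] × [√(c/h), √(d/h)]. Rationalising
√d - √c = (d - c)/(√d + √c), its area is (b - a)(d - c)/(h √h (√d + √c)). -/

open MeasureTheory Set

/-- αʰ(x₁,x₂) = (h x₁, h x₂|x₂|). -/
noncomputable def alphaMap (h : ℝ) (x : ℝ × ℝ) : ℝ × ℝ :=
  (h * x.1, h * x.2 * |x.2|)

/-- The preimage under αʰ (restricted to x₂ ≥ 0) of the unit square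
[j₁,j₁+1]×[j₂,j₂+1]. -/
noncomputable def OmegaJ (h : ℝ) (j₁ : ℤ) (j₂ : ℕ) : Set (ℝ × ℝ) :=
  {x : ℝ × ℝ | 0 ≤ x.2 ∧
    alphaMap h x ∈ Set.Icc ((j₁ : ℝ), (j₂ : ℝ)) ((j₁ : ℝ) + 1, (j₂ : ℝ) + 1)}

/-- The preimage under αʰ (restricted to x₂ ≥ 0) of the subsquare
[j₁+k₁/n, j₁+(k₁+1)/n]×[j₂+k₂/n, j₂+(k₂+1)/n]. -/
noncomputable def OmegaJK (h : ℝ) (n : ℕ) (j₁ : ℤ) (j₂ : ℕ) (k₁ k₂ : ℕ) : Set (ℝ × ℝ) :=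
  {x : ℝ × ℝ | 0 ≤ x.2 ∧
    alphaMap h x ∈ Set.Icc ((j₁ : ℝ) + (k₁ : ℝ) / n, (j₂ : ℝ) + (k₂ : ℝ) / n)
      ((j₁ : ℝ) + ((k₁ : ℝ) + 1) / n, (j₂ : ℝ) + ((k₂ : ℝ) + 1) / n)}

lemma setOf_nonneg_mul_abs_mem_Icc {h : ℝ} (hh : 0 < h) (c : ℝ) {d : ℝ} (hd : 0 ≤ d) :
    {y : ℝ | 0 ≤ y ∧ h * y * |y| ∈ Icc c d} = Icc √(c / h) √(d / h) := by
  ext y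
  simp only [mem_ofPred_eq, mem_Icc]
  constructor
  · rintro ⟨hy, hcy, hyd⟩
    rw [abs_of_nonneg hy, mul_assoc, ← sq] at hcy hyd
    exact ⟨(Real.sqrt_le_left hy).2 ((div_le_iff₀' hh).2 hcy),
      (Real.le_sqrt hy (by positivity)).2 ((le_div_iff₀' hh).2 hyd)⟩
  · rintro ⟨hcy, hyd⟩
    have hy : 0 ≤ y := (Real.sqrt_nonneg _).trans hcy
    rw [abs_of_nonneg hy, mul_assoc, ← sq]
    exact ⟨hy, (div_le_iff₀' hh).1 ((Real.sqrt_le_left hy).1 hcy),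
      (le_div_iff₀' hh).1 ((Real.le_sqrt hy (by positivity)).1 hyd)⟩

lemma setOf_nonneg_alphaMap_mem_Icc {h : ℝ} (hh : 0 < h) (a b c : ℝ) {d : ℝ} (hd : 0 ≤ d) :
    {x : ℝ × ℝ | 0 ≤ x.2 ∧ alphaMap h x ∈ Icc (a, c) (b, d)}
      = Icc (a / h) (b / h) ×ˢ Icc √(c / h) √(d / h) := by
  rw [← preimage_const_mul_Icc₀ a b hh, ← setOf_nonneg_mul_abs_mem_Icc hh c hd]
  ext x
  simp only [alphaMap, mem_ofPred_eq, mem_prod, mem_preimage, mem_Icc, Prod.mk_le_mk]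
  tauto

lemma Real.sqrt_sub_sqrt {x y : ℝ} (hx : 0 ≤ x) (hy : 0 ≤ y) :
    √x - √y = (x - y) / (√x + √y) := by
  rcases (add_nonneg (Real.sqrt_nonneg x) (Real.sqrt_nonneg y)).eq_or_lt with hsum | hsum
  · have hx0 : √x = 0 := by linarith [Real.sqrt_nonneg x, Real.sqrt_nonneg y]
    have hy0 : √y = 0 := by linarith [Real.sqrt_nonneg x, Real.sqrt_nonneg y]
    rw [Real.sqrt_eq_zero hx] at hx0
    rw [Real.sqrt_eq_zero hy] at hy0
    simp [hx0, hy0]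
  · rw [eq_div_iff hsum.ne', mul_comm, ← sq_sub_sq, Real.sq_sqrt hx, Real.sq_sqrt hy]

lemma volume_real_setOf_nonneg_alphaMap_mem_Icc {h : ℝ} (hh : 0 < h) {a b c d : ℝ}
    (hab : a ≤ b) (hc : 0 ≤ c) (hcd : c ≤ d) :
    volume.real {x : ℝ × ℝ | 0 ≤ x.2 ∧ alphaMap h x ∈ Icc (a, c) (b, d)}
      = (b - a) * (d - c) / (h * √h * (√d + √c)) := by
  have hd : 0 ≤ d := hc.trans hcd
  rw [setOf_nonneg_alphaMap_mem_Icc hh a b c hd, Measure.volume_eq_prod, measureReal_prod_prod,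
    Real.volume_real_Icc_of_le (by gcongr), Real.volume_real_Icc_of_le (by gcongr),
    Real.sqrt_div' d hh.le, Real.sqrt_div' c hh.le, ← sub_div, ← sub_div, Real.sqrt_sub_sqrt hd hc]
  field_simp

theorem stmt_3_general (h : ℝ) (hh : 0 < h) (n : ℕ) (hn : 0 < n) (j₁ : ℤ) (j₂ : ℕ)
    (k₁ k₂ : ℕ) :
    (volume (OmegaJK h n j₁ j₂ k₁ k₂)).toReal / (volume (OmegaJ h j₁ j₂)).toReal
      = (1 / (n : ℝ) ^ 2) *
        ((Real.sqrt ((j₂ : ℝ) + 1) + Real.sqrt (j₂ : ℝ)) /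
          (Real.sqrt ((j₂ : ℝ) + ((k₂ : ℝ) + 1) / n) + Real.sqrt ((j₂ : ℝ) + (k₂ : ℝ) / n))) := by
  have hn' : (0 : ℝ) < n := Nat.cast_pos.2 hn
  rw [← measureReal_def, ← measureReal_def, OmegaJK, OmegaJ,
    volume_real_setOf_nonneg_alphaMap_mem_Icc hh (by gcongr; linarith) (by positivity)
      (by gcongr; linarith),
    volume_real_setOf_nonneg_alphaMap_mem_Icc hh (by linarith) (by positivity) (by linarith)]
  have ht₁ : 0 < √((j₂ : ℝ) + ((k₂ : ℝ) + 1) / n) := Real.sqrt_pos.2 (by positivity)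
  have hs₁ : 0 < √((j₂ : ℝ) + 1) := Real.sqrt_pos.2 (by positivity)
  field_simp
  ring

/-- The ratio of the Lebesgue measures λ(Ωʰⱼₖ)/λ(Ωʰⱼ) equals
(1/n²)·(√(j₂+1)+√j₂)/(√(j₂+(k₂+1)/n)+√(j₂+k₂/n)). -/
theorem stmt_3 (h : ℝ) (hh : 0 < h) (n : ℕ) (hn : 0 < n) (j₁ : ℤ) (j₂ : ℕ)
    (k₁ k₂ : ℕ) (hk₁ : k₁ ≤ n - 1) (hk₂ : k₂ ≤ n - 1) :
    (volume (OmegaJK h n j₁ j₂ k₁ k₂)).toReal / (volume (OmegaJ h j₁ j₂)).toReal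
      = (1 / (n : ℝ) ^ 2) *
        ((Real.sqrt ((j₂ : ℝ) + 1) + Real.sqrt (j₂ : ℝ)) /
          (Real.sqrt ((j₂ : ℝ) + ((k₂ : ℝ) + 1) / n) + Real.sqrt ((j₂ : ℝ) + (k₂ : ℝ) / n))) :=
  stmt_3_general h hh n hn j₁ j₂ k₁ k₂
end

section
/- For every positive integer n, every k ∈ {0,…,n−1}, and every integer j ≥ 1, one has the quantitative bound |(1/n²)·(√(j+1)+√j)/(√(j+(k+1)/n)+√(j+k/n)) − 1/n²| ≤ 1/(n²·j). -/
/-!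
Write `a = √(j+1) + √j` and `b = √(j+u) + √(j+v)` with `u = (k+1)/n`, `v = k/n` in `[0, 1]`.
Then `a - b = (√(j+1) - √(j+u)) - (√(j+v) - √j)` is a difference of two numbers in
`[0, √(j+1) - √j]`, and `b ≥ 2√j`. Rationalising, `√(j+1) - √j = 1/(√(j+1) + √j) ≤ 1/(2√j)`,
so `|a/b - 1| = |a - b|/b ≤ 1/(4j)`.
-/

open Real Set

lemma Real.two_mul_sqrt_mul_sqrt_add_one_sub_sqrt_le_one {x : ℝ} (hx : 0 ≤ x) :
    2 * √x * (√(x + 1) - √x) ≤ 1 := by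
  have hconj : (√(x + 1) - √x) * (√(x + 1) + √x) = 1 := by
    ring_nf
    rw [sq_sqrt hx, sq_sqrt (by linarith)]
    ring
  have hmono : √x ≤ √(x + 1) := sqrt_le_sqrt (by linarith)
  nlinarith [sqrt_nonneg x]

lemma Real.abs_div_sqrt_add_sqrt_sub_one_le {x u v : ℝ} (hx : 0 < x) (hu : u ∈ Icc (0 : ℝ) 1)
    (hv : v ∈ Icc (0 : ℝ) 1) :
    |(√(x + 1) + √x) / (√(x + u) + √(x + v)) - 1| ≤ 1 / (4 * x) := by
  have hs : 0 < √x := sqrt_pos.mpr hx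
  have hsu : √x ≤ √(x + u) := sqrt_le_sqrt (by linarith [hu.1])
  have hsv : √x ≤ √(x + v) := sqrt_le_sqrt (by linarith [hv.1])
  have hu1 : √(x + u) ≤ √(x + 1) := sqrt_le_sqrt (by linarith [hu.2])
  have hv1 : √(x + v) ≤ √(x + 1) := sqrt_le_sqrt (by linarith [hv.2])
  have hb : 2 * √x ≤ √(x + u) + √(x + v) := by linarith
  have hb0 : 0 < √(x + u) + √(x + v) := by linarith
  have hdiff : |(√(x + 1) + √x) - (√(x + u) + √(x + v))| ≤ √(x + 1) - √x := by
    rw [abs_sub_le_iff]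
    constructor <;> linarith
  calc |(√(x + 1) + √x) / (√(x + u) + √(x + v)) - 1|
      = |(√(x + 1) + √x) - (√(x + u) + √(x + v))| / (√(x + u) + √(x + v)) := by
        rw [div_sub_one hb0.ne', abs_div, abs_of_pos hb0]
    _ ≤ (√(x + 1) - √x) / (2 * √x) := div_le_div₀ (by linarith) hdiff (by positivity) hb
    _ ≤ 1 / (4 * x) := by
        rw [div_le_div_iff₀ (by positivity) (by positivity)]
        nlinarith [two_mul_sqrt_mul_sqrt_add_one_sub_sqrt_le_one hx.le, mul_self_sqrt hx.le]

/-- For every positive integer n, every k ∈ {0,…,n−1} and every integer j ≥ 1, the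
deviation of the measure ratio from 1/n² is at most 1/(n²·j). -/
theorem stmt_5 (n : ℕ) (hn : 0 < n) (k : ℕ) (hk : k ≤ n - 1) (j : ℕ) (hj : 1 ≤ j) :
    |(1 / (n : ℝ) ^ 2) *
        ((Real.sqrt ((j : ℝ) + 1) + Real.sqrt (j : ℝ)) /
          (Real.sqrt ((j : ℝ) + ((k : ℝ) + 1) / n) + Real.sqrt ((j : ℝ) + (k : ℝ) / n)))
      - 1 / (n : ℝ) ^ 2| ≤ 1 / ((n : ℝ) ^ 2 * j) := by
  have hn' : (0 : ℝ) < n := by exact_mod_cast hn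
  have hj' : (0 : ℝ) < j := by exact_mod_cast hj
  have hkn : (k : ℝ) + 1 ≤ n := by exact_mod_cast (by omega : k + 1 ≤ n)
  have hu : ((k : ℝ) + 1) / n ∈ Icc (0 : ℝ) 1 :=
    ⟨by positivity, (div_le_one hn').mpr hkn⟩
  have hv : (k : ℝ) / n ∈ Icc (0 : ℝ) 1 :=
    ⟨by positivity, (div_le_one hn').mpr (by linarith)⟩
  rw [← mul_sub_one, abs_mul, abs_of_pos (by positivity)]
  calc 1 / (n : ℝ) ^ 2 * |_ - 1|
      ≤ 1 / (n : ℝ) ^ 2 * (1 / (4 * j)) := by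
        gcongr
        exact abs_div_sqrt_add_sqrt_sub_one_le hj' hu hv
    _ ≤ 1 / ((n : ℝ) ^ 2 * j) := by
        rw [one_div_mul_one_div]
        gcongr
        linarith
end

section
/- Let Ω = (a₁,b₁)×(a₂,b₂) ⊂ ℝ² with b_i > a_i > 0, let n be a positive integer, and let ε > 0. Then there exists H such that for all h ≥ H, for every pair of integers (j₁,j₂) with the closed rectangle (αʰ)⁻¹([j₁,j₁+1]×[j₂,j₂+1]) contained in Ω, and every (k₁,k₂) ∈ {0,…,n−1}², one has |λ(Ωʰⱼₖ)/λ(Ωʰⱼ) − 1/n²| < ε, where Ωʰⱼ and Ωʰⱼₖ are the preimages under αʰ(x₁,x₂)=(hx₁,hx₂|x₂|) of the unit square [j₁,j₁+1]×[j₂,j₂+1] and its subsquare [j₁+k₁/n,j₁+(k₁+1)/n]×[j₂+k₂/n,j₂+(k₂+1)/n] respectively (i.e., the sequence {αʰ} is asymptotically uniformly distributed on Ω). -/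
/-!
For `h > 0` and `0 ≤ c₂ ≤ d₂`, the `αʰ`-preimage of `[c₁, d₁] × [c₂, d₂]` is the rectangle
`[c₁/h, d₁/h] × [√(c₂/h), √(d₂/h)]`, so the ratio of measures in question equals
`(1/n) (√(j₂ + (k₂+1)/n) - √(j₂ + k₂/n)) / (√(j₂+1) - √j₂)`. Rationalising both differences turns
it into `1/n²` times a quotient of two sums `√u + √v` with `u, v ∈ [j₂, j₂ + 1]`, which differs
from `1/n²` by at most `1/(4 j₂)`. Finally, the preimage lying in `Ω` forces `h a₂² < j₂ + 1`,
so `j₂ → ∞` uniformly as `h → ∞`.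
-/

open MeasureTheory Set

lemma strictMono_mul_abs : StrictMono fun x : ℝ => x * |x| := by
  intro x y hxy
  rcases le_total 0 x with hx | hx <;> rcases le_total 0 y with hy | hy <;>
    simp only [abs_of_nonneg, abs_of_nonpos, hx, hy] <;>
    nlinarith [mul_pos (sub_pos.2 hxy) (sub_pos.2 hxy)]

lemma surjective_mul_abs : Function.Surjective fun x : ℝ => x * |x| := by
  intro t
  rcases le_total 0 t with ht | ht
  · exact ⟨√t, by simp [abs_of_nonneg (Real.sqrt_nonneg t), Real.mul_self_sqrt ht]⟩
  · refine ⟨-√(-t), ?_⟩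
    simp [abs_of_nonneg (Real.sqrt_nonneg _), Real.mul_self_sqrt (neg_nonneg.2 ht)]

lemma sqrt_mul_abs_sqrt {t : ℝ} (ht : 0 ≤ t) : √t * |√t| = t := by
  rw [abs_of_nonneg (Real.sqrt_nonneg t), Real.mul_self_sqrt ht]

lemma le_mul_abs_iff_sqrt_le {c y : ℝ} (hc : 0 ≤ c) : c ≤ y * |y| ↔ √c ≤ y := by
  conv_lhs => rw [← sqrt_mul_abs_sqrt hc]
  exact strictMono_mul_abs.le_iff_le

lemma mul_abs_le_iff_le_sqrt {d y : ℝ} (hd : 0 ≤ d) : y * |y| ≤ d ↔ y ≤ √d := by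
  conv_lhs => rw [← sqrt_mul_abs_sqrt hd]
  exact strictMono_mul_abs.le_iff_le

lemma alphaMap_preimage_Icc {h : ℝ} (hh : 0 < h) (c₁ d₁ : ℝ) {c₂ d₂ : ℝ} (hc₂ : 0 ≤ c₂)
    (hd₂ : 0 ≤ d₂) :
    alphaMap h ⁻¹' Icc (c₁, c₂) (d₁, d₂) = Icc (c₁ / h) (d₁ / h) ×ˢ Icc √(c₂ / h) √(d₂ / h) := by
  ext ⟨x, y⟩
  simp only [mem_preimage, alphaMap, mem_prod, mem_Icc, Prod.mk_le_mk, mul_assoc,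
    div_le_iff₀' hh, le_div_iff₀' hh, ← le_mul_abs_iff_sqrt_le (div_nonneg hc₂ hh.le),
    ← mul_abs_le_iff_le_sqrt (div_nonneg hd₂ hh.le)]
  tauto

lemma toReal_volume_alphaMap_preimage_Icc {h : ℝ} (hh : 0 < h) {c₁ d₁ c₂ d₂ : ℝ} (h₁ : c₁ ≤ d₁)
    (hc₂ : 0 ≤ c₂) (h₂ : c₂ ≤ d₂) :
    (volume (alphaMap h ⁻¹' Icc (c₁, c₂) (d₁, d₂))).toReal
      = (d₁ - c₁) * (√d₂ - √c₂) / (h * √h) := by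
  have hsqrt : √c₂ ≤ √d₂ := Real.sqrt_le_sqrt h₂
  rw [alphaMap_preimage_Icc hh c₁ d₁ hc₂ (hc₂.trans h₂), Measure.volume_eq_prod,
    Measure.prod_prod, Real.volume_Icc, Real.volume_Icc, ENNReal.toReal_mul,
    ENNReal.toReal_ofReal, ENNReal.toReal_ofReal, Real.sqrt_div' _ hh.le, Real.sqrt_div' _ hh.le]
  · have : 0 < √h := Real.sqrt_pos.2 hh
    field_simp
  · rw [sub_nonneg]; gcongr
  · rw [sub_nonneg]; gcongr

lemma lt_of_alphaMap_preimage_subset {h a₁ b₁ a₂ b₂ c₁ d₁ c₂ d₂ : ℝ} (hh : 0 < h) (ha₂ : 0 < a₂)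
    (h₁ : c₁ ≤ d₁) (h₂ : c₂ ≤ d₂)
    (hsub : alphaMap h ⁻¹' Icc (c₁, c₂) (d₁, d₂) ⊆ Ioo a₁ b₁ ×ˢ Ioo a₂ b₂) :
    h * a₂ ^ 2 < d₂ := by
  obtain ⟨y, hy⟩ : ∃ y, y * |y| = d₂ / h := surjective_mul_abs _
  have hmem : (c₁ / h, y) ∈ alphaMap h ⁻¹' Icc (c₁, c₂) (d₁, d₂) := by
    have hy' : h * y * |y| = d₂ := by rw [mul_assoc, hy, mul_div_cancel₀ _ hh.ne']
    simp only [mem_preimage, alphaMap, mem_Icc, Prod.mk_le_mk, mul_div_cancel₀ _ hh.ne', hy']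
    exact ⟨⟨le_rfl, h₂⟩, h₁, le_rfl⟩
  have hay : a₂ * |a₂| < y * |y| := strictMono_mul_abs (hsub hmem).2.1
  rwa [hy, abs_of_pos ha₂, ← sq, lt_div_iff₀' hh] at hay

lemma Real.sqrt_sub_sqrt_eq_div {u v : ℝ} (hu : 0 ≤ u) (hv : 0 < v) :
    √u - √v = (u - v) / (√u + √v) := by
  have hpos : 0 < √u + √v := add_pos_of_nonneg_of_pos (Real.sqrt_nonneg u) (Real.sqrt_pos.2 hv)
  rw [eq_div_iff hpos.ne']
  linear_combination Real.mul_self_sqrt hu - Real.mul_self_sqrt hv.le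

lemma abs_sqrt_add_sub_sqrt_add_div_sub_le {j s t : ℝ} (hj : 0 < j) (hs : 0 ≤ s) (hst : s ≤ t)
    (ht : t ≤ 1) :
    |(√(j + t) - √(j + s)) / (√(j + 1) - √j) - (t - s)| ≤ (t - s) / (4 * j) := by
  set p := √(j + 1) + √j
  set q := √(j + t) + √(j + s)
  have hs₁ : √j ≤ √(j + s) := Real.sqrt_le_sqrt (by linarith)
  have hst₁ : √(j + s) ≤ √(j + t) := Real.sqrt_le_sqrt (by linarith)
  have ht₁ : √(j + t) ≤ √(j + 1) := Real.sqrt_le_sqrt (by linarith)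
  have hsj : 0 < √j := Real.sqrt_pos.2 hj
  have hp : 2 * √j ≤ p := by linarith
  have hq : 2 * √j ≤ q := by linarith
  have hden : √(j + 1) - √j = 1 / p := by
    rw [Real.sqrt_sub_sqrt_eq_div (by linarith) hj, add_sub_cancel_left]
  have hnum : √(j + t) - √(j + s) = (t - s) / q := by
    rw [Real.sqrt_sub_sqrt_eq_div (by linarith) (by linarith), add_sub_add_left_eq_sub]
  have hpq : |p - q| ≤ 1 / p := by
    rw [← hden]
    exact abs_le.2 ⟨by linarith, by linarith⟩
  have hsplit : (√(j + t) - √(j + s)) / (√(j + 1) - √j) - (t - s) = (t - s) * (p - q) / q := by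
    have : q ≠ 0 := by linarith
    have : p ≠ 0 := by linarith
    rw [hnum, hden]
    field_simp
  rw [hsplit, abs_div, abs_mul, abs_of_nonneg (sub_nonneg.2 hst),
    abs_of_pos (show 0 < q by linarith)]
  calc (t - s) * |p - q| / q ≤ (t - s) * (1 / p) / q := by gcongr
    _ = (t - s) / (p * q) := by rw [mul_one_div, div_div]
    _ ≤ (t - s) / (4 * j) := by
      refine div_le_div_of_nonneg_left (sub_nonneg.2 hst) (by positivity) ?_
      nlinarith [Real.mul_self_sqrt hj.le]

lemma abs_sqrt_ratio_sub_inv_sq_le {j : ℝ} (hj : 0 < j) {n k : ℕ} (hk : k < n) :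
    |1 / n * (√(j + (k + 1) / n) - √(j + k / n)) / (√(j + 1) - √j) - 1 / (n : ℝ) ^ 2|
      ≤ 1 / (4 * j) := by
  have hn₀ : (0 : ℝ) < n := by exact_mod_cast (k.zero_le.trans_lt hk)
  have hkn : (k : ℝ) + 1 ≤ n := by exact_mod_cast hk
  have hn₁ : 1 / (n : ℝ) ≤ 1 := (div_le_one hn₀).2 (by linarith)
  have hest := abs_sqrt_add_sub_sqrt_add_div_sub_le hj (by positivity)
    (by gcongr; linarith : (k : ℝ) / n ≤ (k + 1) / n) ((div_le_one hn₀).2 hkn)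
  rw [show ((k : ℝ) + 1) / n - k / n = 1 / n by ring] at hest
  calc _ = |1 / (n : ℝ)| * |(√(j + (k + 1) / n) - √(j + k / n)) / (√(j + 1) - √j) - 1 / n| := by
        rw [← abs_mul]
        ring_nf
    _ ≤ 1 * (1 / (4 * j)) := by
        gcongr
        · rwa [abs_of_pos (one_div_pos.2 hn₀)]
        · exact hest.trans (div_le_div_of_nonneg_right hn₁ (by positivity))
    _ = 1 / (4 * j) := one_mul _

theorem stmt_8_general (a₁ b₁ a₂ b₂ : ℝ)
    (ha₂ : 0 < a₂) (n : ℕ) (hn : 0 < n) (ε : ℝ) (hε : 0 < ε) :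
    ∃ H : ℕ, ∀ h : ℕ, H ≤ h → ∀ j₁ j₂ : ℤ,
      alphaMap h ⁻¹' Set.Icc ((j₁ : ℝ), (j₂ : ℝ)) ((j₁ : ℝ) + 1, (j₂ : ℝ) + 1) ⊆
          Set.Ioo a₁ b₁ ×ˢ Set.Ioo a₂ b₂ →
      ∀ k₁ k₂ : ℕ, k₁ ≤ n - 1 → k₂ ≤ n - 1 →
        |(volume (alphaMap h ⁻¹'
              Set.Icc ((j₁ : ℝ) + (k₁ : ℝ) / n, (j₂ : ℝ) + (k₂ : ℝ) / n)
                ((j₁ : ℝ) + ((k₁ : ℝ) + 1) / n, (j₂ : ℝ) + ((k₂ : ℝ) + 1) / n))).toReal /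
            (volume (alphaMap h ⁻¹'
              Set.Icc ((j₁ : ℝ), (j₂ : ℝ)) ((j₁ : ℝ) + 1, (j₂ : ℝ) + 1))).toReal
          - 1 / (n : ℝ) ^ 2| < ε := by
  obtain ⟨H, hH⟩ := Filter.eventually_atTop.1 <|
    (tendsto_natCast_atTop_atTop.atTop_mul_const (pow_pos ha₂ 2)).eventually_ge_atTop
      (1 / (4 * ε) + 1)
  refine ⟨H, fun h hHh j₁ j₂ hsub k₁ k₂ _ hk₂ => ?_⟩
  have hε' : 0 < 1 / (4 * ε) := by positivity
  have hlarge := hH h hHh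
  have hh : (0 : ℝ) < h := by nlinarith [h.cast_nonneg (α := ℝ)]
  have hj : 1 / (4 * ε) < j₂ := by
    linarith [lt_of_alphaMap_preimage_subset hh ha₂ (by linarith) (by linarith) hsub]
  have hj₀ : (0 : ℝ) < j₂ := hε'.trans hj
  rw [toReal_volume_alphaMap_preimage_Icc hh (by gcongr; linarith) (by positivity)
      (by gcongr; linarith),
    toReal_volume_alphaMap_preimage_Icc hh (by linarith) hj₀.le (by linarith),
    div_div_div_cancel_right₀ (by positivity), add_sub_add_left_eq_sub, add_sub_cancel_left,
    one_mul, ← sub_div, add_sub_cancel_left]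
  refine (abs_sqrt_ratio_sub_inv_sq_le hj₀ (by omega)).trans_lt ?_
  rw [div_lt_iff₀ (by positivity)]
  rw [div_lt_iff₀ (by positivity)] at hj
  linarith

/-- The sequence {αʰ} is asymptotically uniformly distributed on
Ω = (a₁,b₁)×(a₂,b₂): for every n ∈ ℕ₊ and ε > 0 there is H such that for all h ≥ H,
all unit squares [j₁,j₁+1]×[j₂,j₂+1] whose αʰ-preimage is contained in Ω, and all
subsquare indices (k₁,k₂) ∈ {0,…,n−1}², the ratio of the Lebesgue measures of the
preimages of the subsquare and of the unit square deviates from 1/n² by less than ε. -/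
theorem stmt_8 (a₁ b₁ a₂ b₂ : ℝ) (ha₁ : 0 < a₁) (hb₁ : a₁ < b₁)
    (ha₂ : 0 < a₂) (hb₂ : a₂ < b₂) (n : ℕ) (hn : 0 < n) (ε : ℝ) (hε : 0 < ε) :
    ∃ H : ℕ, ∀ h : ℕ, H ≤ h → ∀ j₁ j₂ : ℤ,
      alphaMap h ⁻¹' Set.Icc ((j₁ : ℝ), (j₂ : ℝ)) ((j₁ : ℝ) + 1, (j₂ : ℝ) + 1) ⊆
          Set.Ioo a₁ b₁ ×ˢ Set.Ioo a₂ b₂ →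
      ∀ k₁ k₂ : ℕ, k₁ ≤ n - 1 → k₂ ≤ n - 1 →
        |(volume (alphaMap h ⁻¹'
              Set.Icc ((j₁ : ℝ) + (k₁ : ℝ) / n, (j₂ : ℝ) + (k₂ : ℝ) / n)
                ((j₁ : ℝ) + ((k₁ : ℝ) + 1) / n, (j₂ : ℝ) + ((k₂ : ℝ) + 1) / n))).toReal /
            (volume (alphaMap h ⁻¹'
              Set.Icc ((j₁ : ℝ), (j₂ : ℝ)) ((j₁ : ℝ) + 1, (j₂ : ℝ) + 1))).toReal
          - 1 / (n : ℝ) ^ 2| < ε :=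
  stmt_8_general a₁ b₁ a₂ b₂ ha₂ n hn ε hε
end
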